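/- Let the pair (e(k), ẽ(k)) evolve by e(k+1) = F e(k) + Ω ẽ(k), ẽ(k+1) = G ẽ(k) with ρ(F) < 1 and ρ(G) < 1, and let P > 0 satisfy FᵀPF − P = −(Q̃ + KᵀRK) for some Q̃ ≥ 0, R > 0 and matrix K with F = Ã + B̄K. Then the total cost J⋆(s) = Σ_{k=s}^∞ [e(k)ᵀQ̃e(k) + (K e(k) + D ẽ(k))ᵀ R (K e(k) + D ẽ(k))] (for any fixed matrix D) is finite for every s, and J⋆(s) − e(s)ᵀPe(s) → 0 as s → ∞. -/

import Mathlib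

/-!
By Gelfand's formula, `ρ(F) < 1` and `ρ(G) < 1` make `‖Fᵏ‖` and `‖Gᵏ‖` summable. The
variation-of-constants formula writes the state of `x(k+1) = A x(k) + u(k)` as `Aᵏ⁺¹ x(0)` plus
the Cauchy product of `(Aᵏ)` with the input, so a summable input gives a summable state: first
`ẽ`, then `e`, are `ℓ¹` sequences. A quadratic form in `ℓ¹` sequences is summable, so the stage
cost is summable; `J⋆(s)` is the tail of its series, hence tends to `0`, and so does the summable
sequence `e(s)ᵀPe(s)`.
-/

open Matrix Filter Topology

attribute [local instance] Matrix.linftyOpSeminormedAddCommGroup Matrix.linftyOpNormedAddCommGroup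
  Matrix.linftyOpNormedRing Matrix.linftyOpNormedAlgebra

theorem summable_norm_pow_of_spectralRadius_lt_one {A : Type*} [NormedRing A] [NormedAlgebra ℂ A]
    [CompleteSpace A] {a : A} (ha : spectralRadius ℂ a < 1) : Summable fun n => ‖a ^ n‖ := by
  obtain ⟨r, hρr, hr1⟩ := ENNReal.lt_iff_exists_nnreal_btwn.1 ha
  have hroot : ∀ᶠ n : ℕ in atTop, ‖a ^ n‖ ^ (1 / n : ℝ) < r := by
    filter_upwards [(spectrum.pow_norm_pow_one_div_tendsto_nhds_spectralRadius
      a).eventually_lt_const hρr] with n hn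
    exact (ENNReal.ofReal_lt_coe_iff (by positivity)).1 hn
  refine .of_norm_bounded_eventually_nat (summable_geometric_of_lt_one r.2 (mod_cast hr1)) ?_
  filter_upwards [hroot, eventually_ne_atTop 0] with n hn hn0
  calc ‖‖a ^ n‖‖ = (‖a ^ n‖ ^ (1 / n : ℝ)) ^ n := by
        rw [norm_norm, one_div, Real.rpow_inv_natCast_pow (norm_nonneg _) hn0]
    _ ≤ (r : ℝ) ^ n := pow_le_pow_left₀ (by positivity) hn.le n

namespace Matrix

variable {ι κ α : Type*} [Fintype ι] [Fintype κ]

theorem linfty_opNorm_map_eq [SeminormedAddCommGroup α] {β : Type*} [SeminormedAddCommGroup β]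
    (A : Matrix ι κ α) (f : α → β) (hf : ∀ a, ‖f a‖ = ‖a‖) : ‖A.map f‖ = ‖A‖ := by
  have hf' (a : α) : ‖f a‖₊ = ‖a‖₊ := NNReal.eq (hf a)
  simp only [linfty_opNorm_def, map_apply, hf']

theorem norm_dotProduct_le [SeminormedRing α] (x y : ι → α) :
    ‖x ⬝ᵥ y‖ ≤ Fintype.card ι * (‖x‖ * ‖y‖) :=
  calc ‖x ⬝ᵥ y‖ ≤ ∑ i, ‖x i‖ * ‖y i‖ :=
        (norm_sum_le _ _).trans (Finset.sum_le_sum fun i _ => norm_mul_le _ _)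
    _ ≤ ∑ _i : ι, ‖x‖ * ‖y‖ := by
        gcongr with i <;> exact norm_le_pi_norm _ i
    _ = Fintype.card ι * (‖x‖ * ‖y‖) := by simp

open Finset in
theorem eq_pow_mulVec_add_sum_of_recurrence [DecidableEq ι] [Semiring α] (A : Matrix ι ι α)
    {x u : ℕ → ι → α} (hx : ∀ k, x (k + 1) = A *ᵥ x k + u k) (k : ℕ) :
    x (k + 1) = (A ^ (k + 1)) *ᵥ x 0 + ∑ p ∈ antidiagonal k, (A ^ p.1) *ᵥ u p.2 := by
  induction k with
  | zero => simp [hx]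
  | succ k ih =>
    rw [hx, ih, Nat.sum_antidiagonal_succ, mulVec_add, mulVec_mulVec, ← pow_succ',
      mulVec_sum]
    simp only [mulVec_mulVec, ← pow_succ', pow_zero, one_mulVec]
    abel

open Finset in
theorem summable_norm_of_recurrence [DecidableEq ι] [NormedRing α] (A : Matrix ι ι α)
    {x u : ℕ → ι → α} (hA : Summable fun k => ‖A ^ k‖) (hu : Summable fun k => ‖u k‖)
    (hx : ∀ k, x (k + 1) = A *ᵥ x k + u k) : Summable fun k => ‖x k‖ := by
  have hconv : Summable fun k => ∑ p ∈ antidiagonal k, ‖A ^ p.1‖ * ‖u p.2‖ := by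
    refine summable_sum_mul_antidiagonal_of_summable_norm' (f := fun k => ‖A ^ k‖)
      (g := fun k => ‖u k‖) ?_ hA ?_ hu
    · simpa only [norm_norm] using hA
    · simpa only [norm_norm] using hu
  have hA1 : Summable fun k => ‖A ^ (k + 1)‖ * ‖x 0‖ :=
    ((summable_nat_add_iff 1).2 hA).mul_right _
  refine (summable_nat_add_iff 1).1 <| .of_nonneg_of_le (fun _ => norm_nonneg _) (fun k => ?_)
    (hA1.add hconv)
  rw [eq_pow_mulVec_add_sum_of_recurrence A hx k]
  exact (norm_add_le _ _).trans <| add_le_add (linfty_opNorm_mulVec _ _) <|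
    (norm_sum_le _ _).trans <| sum_le_sum fun p _ => linfty_opNorm_mulVec _ _

theorem summable_norm_mulVec [SeminormedRing α] (M : Matrix ι κ α) {x : ℕ → κ → α}
    (hx : Summable fun k => ‖x k‖) : Summable fun k => ‖M *ᵥ x k‖ :=
  .of_nonneg_of_le (fun _ => norm_nonneg _) (fun _ => linfty_opNorm_mulVec _ _) (hx.mul_left ‖M‖)

theorem summable_dotProduct_mulVec [NormedRing α] [CompleteSpace α] (M : Matrix ι κ α)
    {x : ℕ → ι → α} {y : ℕ → κ → α} (hx : Summable fun k => ‖x k‖)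
    (hy : Summable fun k => ‖y k‖) : Summable fun k => x k ⬝ᵥ M *ᵥ y k := by
  refine .of_norm_bounded_eventually_nat
    ((summable_norm_mulVec M hy).mul_left (Fintype.card ι : ℝ)) ?_
  filter_upwards [hx.tendsto_atTop_zero.eventually_le_const one_pos] with k hx_le_one
  calc ‖x k ⬝ᵥ M *ᵥ y k‖ ≤ Fintype.card ι * (‖x k‖ * ‖M *ᵥ y k‖) := norm_dotProduct_le _ _
    _ ≤ Fintype.card ι * ‖M *ᵥ y k‖ := by
        gcongr
        exact mul_le_of_le_one_left (norm_nonneg _) hx_le_one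

theorem summable_norm_pow_of_spectralRadius_map_ofReal_lt_one [DecidableEq ι]
    {A : Matrix ι ι ℝ} (hA : spectralRadius ℂ (A.map Complex.ofReal) < 1) :
    Summable fun n => ‖A ^ n‖ := by
  have : CompleteSpace (Matrix ι ι ℂ) := FiniteDimensional.complete ℂ _
  convert summable_norm_pow_of_spectralRadius_lt_one hA using 2 with n
  rw [← linfty_opNorm_map_eq (A ^ n) _ Complex.norm_real]
  exact congrArg norm (map_pow Complex.ofRealHom.mapMatrix A n)

end Matrix

theorem observer_based_cost_asymptotically_optimal_general {n m p : ℕ}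
    (F P Qtil : Matrix (Fin n) (Fin n) ℝ)
    (R : Matrix (Fin m) (Fin m) ℝ) (K : Matrix (Fin m) (Fin n) ℝ)
    (Ω : Matrix (Fin n) (Fin p) ℝ) (G : Matrix (Fin p) (Fin p) ℝ)
    (D : Matrix (Fin m) (Fin p) ℝ)
    (hFs : spectralRadius ℂ (F.map Complex.ofReal) < 1)
    (hGs : spectralRadius ℂ (G.map Complex.ofReal) < 1)
    (e : ℕ → Fin n → ℝ) (etil : ℕ → Fin p → ℝ)
    (he : ∀ k : ℕ, e (k + 1) = F.mulVec (e k) + Ω.mulVec (etil k))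
    (hetil : ∀ k : ℕ, etil (k + 1) = G.mulVec (etil k)) :
    (∀ s : ℕ, Summable (fun k : ℕ =>
        (e (s + k)) ⬝ᵥ Qtil.mulVec (e (s + k)) +
        (K.mulVec (e (s + k)) + D.mulVec (etil (s + k))) ⬝ᵥ
          R.mulVec (K.mulVec (e (s + k)) + D.mulVec (etil (s + k))))) ∧
    Tendsto (fun s : ℕ =>
        (∑' k : ℕ,
          ((e (s + k)) ⬝ᵥ Qtil.mulVec (e (s + k)) +
           (K.mulVec (e (s + k)) + D.mulVec (etil (s + k))) ⬝ᵥ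
             R.mulVec (K.mulVec (e (s + k)) + D.mulVec (etil (s + k)))))
          - (e s) ⬝ᵥ P.mulVec (e s)) atTop (𝓝 0) := by
  have hetil_sum : Summable fun k => ‖etil k‖ :=
    summable_norm_of_recurrence G (summable_norm_pow_of_spectralRadius_map_ofReal_lt_one hGs)
      (u := 0) (by simp) (by simpa using hetil)
  have he_sum : Summable fun k => ‖e k‖ :=
    summable_norm_of_recurrence F (summable_norm_pow_of_spectralRadius_map_ofReal_lt_one hFs)
      (summable_norm_mulVec Ω hetil_sum) he
  have hinput_sum : Summable fun k => ‖K *ᵥ e k + D *ᵥ etil k‖ :=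
    .of_nonneg_of_le (fun _ => norm_nonneg _) (fun _ => norm_add_le _ _)
      ((summable_norm_mulVec K he_sum).add (summable_norm_mulVec D hetil_sum))
  set cost : ℕ → ℝ := fun k => e k ⬝ᵥ Qtil *ᵥ e k +
    (K *ᵥ e k + D *ᵥ etil k) ⬝ᵥ R *ᵥ (K *ᵥ e k + D *ᵥ etil k)
  have hcost : Summable cost :=
    (summable_dotProduct_mulVec Qtil he_sum he_sum).add
      (summable_dotProduct_mulVec R hinput_sum hinput_sum)
  refine ⟨fun s => ?_, ?_⟩
  · simpa only [cost, Nat.add_comm] using (summable_nat_add_iff s).2 hcost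
  · simpa only [cost, Nat.add_comm, sub_zero] using (tendsto_sum_nat_add cost).sub
      (summable_dotProduct_mulVec P he_sum he_sum).tendsto_atTop_zero

/-- Asymptotic optimality of the observer-based controller: with
`e(k+1) = F e(k) + Ω ẽ(k)`, `ẽ(k+1) = G ẽ(k)`, `ρ(F) < 1`, `ρ(G) < 1`, `F = Ã + B̄K`, and
`P > 0` satisfying `FᵀPF − P = −(Q̃ + KᵀRK)` with `Q̃ ⪰ 0`, `R ≻ 0`, the realized cost
`J⋆(s) = Σ_{k=s}^∞ [e(k)ᵀQ̃e(k) + (Ke(k)+Dẽ(k))ᵀR(Ke(k)+Dẽ(k))]` is finite for every `s`,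
and `J⋆(s) − e(s)ᵀPe(s) → 0` as `s → ∞`. -/
theorem observer_based_cost_asymptotically_optimal {n m p : ℕ}
    (Atil F P Qtil : Matrix (Fin n) (Fin n) ℝ) (Bbar : Matrix (Fin n) (Fin m) ℝ)
    (R : Matrix (Fin m) (Fin m) ℝ) (K : Matrix (Fin m) (Fin n) ℝ)
    (Ω : Matrix (Fin n) (Fin p) ℝ) (G : Matrix (Fin p) (Fin p) ℝ)
    (D : Matrix (Fin m) (Fin p) ℝ)
    (hF : F = Atil + Bbar * K)
    (hP : P.PosDef) (hQ : Qtil.PosSemidef) (hR : R.PosDef)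
    (hLyap : Fᵀ * P * F - P = -(Qtil + Kᵀ * R * K))
    (hFs : spectralRadius ℂ (F.map Complex.ofReal) < 1)
    (hGs : spectralRadius ℂ (G.map Complex.ofReal) < 1)
    (e : ℕ → Fin n → ℝ) (etil : ℕ → Fin p → ℝ)
    (he : ∀ k : ℕ, e (k + 1) = F.mulVec (e k) + Ω.mulVec (etil k))
    (hetil : ∀ k : ℕ, etil (k + 1) = G.mulVec (etil k)) :
    (∀ s : ℕ, Summable (fun k : ℕ =>
        (e (s + k)) ⬝ᵥ Qtil.mulVec (e (s + k)) +
        (K.mulVec (e (s + k)) + D.mulVec (etil (s + k))) ⬝ᵥ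
          R.mulVec (K.mulVec (e (s + k)) + D.mulVec (etil (s + k))))) ∧
    Tendsto (fun s : ℕ =>
        (∑' k : ℕ,
          ((e (s + k)) ⬝ᵥ Qtil.mulVec (e (s + k)) +
           (K.mulVec (e (s + k)) + D.mulVec (etil (s + k))) ⬝ᵥ
             R.mulVec (K.mulVec (e (s + k)) + D.mulVec (etil (s + k)))))
          - (e s) ⬝ᵥ P.mulVec (e s)) atTop (𝓝 0) :=
  observer_based_cost_asymptotically_optimal_general F P Qtil R K Ω G D hFs hGs e etil he hetil
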